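/- Two finite sequences of distinct integers (g_μ, ..., g_p, k_{α+1}, ..., k_q) and (g_{μ+1}−1, ..., g_p−1, k_{α+1}−1, ..., k_q−1, n), where all entries of the first lie in {g_μ,...,n} with g_μ its minimum and n among its members, determine permutations (of their common underlying sets suitably identified) of the same sign: shifting all entries down by 1 and moving the resulting smallest entry from front to back each multiply the sign by (−1)^{n−g_μ}, so the composite preserves sign. -/

import Mathlib

/-! The head `g` is smaller than every other entry and `n` is larger than every shifted entry,
so neither takes part in an inversion, while the monotone shift `x ↦ x - 1` creates or destroys
none. Hence both sequences have exactly as many inversions as the tail of `l`. -/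

/- The sign of a finite sequence of distinct integers: the sign of the permutation sorting
it into increasing order, computed as `(-1)^inversions`. -/
def listSign (l : List ℤ) : ℤ :=
  (-1) ^ (Finset.univ.filter
    (fun p : Fin l.length × Fin l.length => p.1 < p.2 ∧ l.get p.2 < l.get p.1)).card

namespace List

variable {α β : Type*} [LinearOrder α] [LinearOrder β]

def inversions (l : List α) : Finset (Fin l.length × Fin l.length) :=
  {p | p.1 < p.2 ∧ l.get p.2 < l.get p.1}

theorem mem_inversions {l : List α} {i j : Fin l.length} :
    (i, j) ∈ l.inversions ↔ i < j ∧ l.get j < l.get i := by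
  simp [inversions]

theorem card_inversions_eq_of_strictMono {l : List α} {l' : List β}
    (e : Fin l.length → Fin l'.length) (he : StrictMono e)
    (hlt : ∀ i j, l'.get (e j) < l'.get (e i) ↔ l.get j < l.get i)
    (hrange : ∀ i j, (i, j) ∈ l'.inversions → i ∈ Set.range e ∧ j ∈ Set.range e) :
    l'.inversions.card = l.inversions.card := by
  refine (Finset.card_bij (fun p _ => (e p.1, e p.2)) ?_ ?_ ?_).symm
  · rintro ⟨i, j⟩ hij
    rw [mem_inversions] at hij ⊢
    exact ⟨he hij.1, (hlt i j).2 hij.2⟩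
  · rintro ⟨i, j⟩ - ⟨i', j'⟩ - h
    simp only [Prod.mk.injEq, he.injective.eq_iff] at h
    rw [h.1, h.2]
  · rintro ⟨i', j'⟩ hij
    obtain ⟨⟨i, rfl⟩, ⟨j, rfl⟩⟩ := hrange i' j' hij
    rw [mem_inversions, he.lt_iff_lt, hlt] at hij
    exact ⟨(i, j), mem_inversions.2 hij, rfl⟩

theorem card_inversions_map {f : α → β} (hf : StrictMono f) (l : List α) :
    (l.map f).inversions.card = l.inversions.card :=
  card_inversions_eq_of_strictMono (Fin.cast (length_map f).symm) (fun _ _ h => h)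
    (fun i j => by simp [hf.lt_iff_lt])
    (fun i j _ => ⟨⟨Fin.cast (length_map f) i, rfl⟩, ⟨Fin.cast (length_map f) j, rfl⟩⟩)

theorem card_inversions_cons_of_forall_lt {a : α} {l : List α} (h : ∀ x ∈ l, a < x) :
    (a :: l).inversions.card = l.inversions.card := by
  refine card_inversions_eq_of_strictMono Fin.succ Fin.strictMono_succ (fun _ _ => Iff.rfl) ?_
  intro i j hij
  rw [mem_inversions] at hij
  have hi : i ≠ 0 := by
    rintro rfl
    obtain ⟨j, rfl⟩ := Fin.exists_succ_eq.2 (Fin.pos_iff_ne_zero.1 hij.1)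
    exact (h _ (l.get_mem j)).not_gt hij.2
  exact ⟨Fin.exists_succ_eq.2 hi,
    Fin.exists_succ_eq.2 (Fin.pos_iff_ne_zero.1 ((Fin.pos_iff_ne_zero.2 hi).trans hij.1))⟩

theorem card_inversions_concat_of_forall_lt {b : α} {l : List α} (h : ∀ x ∈ l, x < b) :
    (l.concat b).inversions.card = l.inversions.card := by
  have hle : l.length ≤ (l.concat b).length := by simp
  refine card_inversions_eq_of_strictMono (Fin.castLE hle) (Fin.strictMono_castLE hle)
    (fun i j => by simp [getElem_append_left]) ?_
  intro i j hij
  rw [mem_inversions] at hij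
  have hj : (j : ℕ) < l.length := by
    by_contra hj
    have hj' : (j : ℕ) = l.length := by have := j.isLt; simp only [length_concat] at this; omega
    have hi : (i : ℕ) < l.length := hj' ▸ hij.1
    have := hij.2
    simp [hj', hi, getElem_append_left] at this
    exact (h _ (getElem_mem hi)).not_gt this
  simp only [Fin.range_castLE, Set.mem_ofPred_eq]
  exact ⟨(Fin.lt_def.1 hij.1).trans hj, hj⟩

end List

theorem listSign_eq_neg_one_pow (l : List ℤ) : listSign l = (-1) ^ l.inversions.card := rfl

theorem listSign_shift_rotate_general (g n : ℤ) (l : List ℤ) (hne : l ≠ []) (hnd : l.Nodup)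
    (hhead : l.head hne = g) (hmem : ∀ x ∈ l, g ≤ x ∧ x ≤ n) :
    listSign l = listSign ((l.tail.map (· - 1)).concat n) := by
  obtain ⟨a, t, rfl⟩ := List.exists_cons_of_ne_nil hne
  obtain rfl : a = g := hhead
  have hhead_lt : ∀ x ∈ t, a < x := fun x hx =>
    (hmem x (List.mem_cons_of_mem _ hx)).1.lt_of_ne fun h => (List.nodup_cons.1 hnd).1 (h ▸ hx)
  have hshift_lt : ∀ y ∈ t.map (· - 1), y < n := by
    simp only [List.mem_map, forall_exists_index, and_imp, forall_apply_eq_imp_iff₂]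
    exact fun x hx => by linarith [(hmem x (List.mem_cons_of_mem _ hx)).2]
  rw [listSign_eq_neg_one_pow, listSign_eq_neg_one_pow, List.tail_cons,
    List.card_inversions_concat_of_forall_lt hshift_lt,
    List.card_inversions_map (fun _ _ h => by simpa using h),
    List.card_inversions_cons_of_forall_lt hhead_lt]

theorem listSign_shift_rotate (g n : ℤ) (l : List ℤ) (hne : l ≠ []) (hnd : l.Nodup)
    (hhead : l.head hne = g) (hmem : ∀ x ∈ l, g ≤ x ∧ x ≤ n) (hn : n ∈ l) :
    listSign l = listSign ((l.tail.map (· - 1)).concat n) :=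
  listSign_shift_rotate_general g n l hne hnd hhead hmem
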